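/- arXiv:2309.08464 — 5 statements merged into one kernel-verified Lean document; each statement's English description precedes it below -/
import Mathlib

section
/- Consider the differentially private centralized averaging mechanism with Laplace noise: for d ∈ ℝⁿ the published output is x = (1/n)Σᵢ dᵢ + ξ where ξ has law Lap(0,b), b > 0; i.e. M_d = Lap((1/n)Σᵢ dᵢ, b). Let ε > 0 and μ > 0. If {M_d} preserves ε-differential privacy under μ-adjacency, then b ≥ μ/(nε), and consequently E|x − d*|² = 2b² ≥ 2μ²/(n²ε²), where d* = (1/n)Σᵢ dᵢ. -/
open MeasureTheory ProbabilityTheory Filter Matrix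

/-- The Laplace measure `Lap(m, b)` on `ℝ`, given by density
`x ↦ (1/(2b)) exp(−|x − m|/b)` with respect to Lebesgue measure. -/
noncomputable def laplaceMeasure (m b : ℝ) : Measure ℝ :=
  volume.withDensity fun x => ENNReal.ofReal ((1 / (2 * b)) * Real.exp (-|x - m| / b))

/-- `d` and `d'` are `μ`-adjacent: they differ in exactly one coordinate and
`‖d − d'‖₁ ≤ μ`. -/
def MuAdjacent {n : ℕ} (μ : ℝ) (d d' : Fin n → ℝ) : Prop :=
  (∃! i, d i ≠ d' i) ∧ ∑ i, |d i - d' i| ≤ μ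

/-- The family of measures `M` indexed by `d ∈ ℝⁿ` preserves `(ε,δ)`-differential
privacy under `μ`-adjacency. -/
def PreservesDP {n : ℕ} {Ω : Type*} [MeasurableSpace Ω] (μ ε δ : ℝ)
    (M : (Fin n → ℝ) → Measure Ω) : Prop :=
  ∀ d d' : Fin n → ℝ, MuAdjacent μ d d' → ∀ S : Set Ω, MeasurableSet S →
    M d S ≤ ENNReal.ofReal (Real.exp ε) * M d' S + ENNReal.ofReal δ

/-- Assumption 1: `L` is the Laplacian of an undirected connected weighted graph with
weights `w`, with `w_{ii} = 0`, `w_{ij} = w_{ji} ≥ 0`, and `∑_j w_{ij} < 1`. -/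
structure IsGraphLaplacian {n : ℕ} (L : Matrix (Fin n) (Fin n) ℝ)
    (w : Fin n → Fin n → ℝ) : Prop where
  symm : ∀ i j, w i j = w j i
  nonneg : ∀ i j, 0 ≤ w i j
  diag_zero : ∀ i, w i i = 0
  row_sum_lt_one : ∀ i, ∑ j, w i j < 1
  connected : ∀ i j : Fin n, Relation.ReflTransGen (fun a b => 0 < w a b) i j
  off_diag : ∀ i j, i ≠ j → L i j = -(w i j)
  diag : ∀ i, L i i = ∑ k, w i k

/-- Euclidean norm on `ℝⁿ` (as functions `Fin n → ℝ`). -/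
noncomputable def euclNorm {n : ℕ} (v : Fin n → ℝ) : ℝ := Real.sqrt (∑ i, v i ^ 2)

/-- The standard normal CDF `Φ`. -/
noncomputable def stdNormalCDF (s : ℝ) : ℝ :=
  (Real.sqrt (2 * Real.pi))⁻¹ * ∫ τ in Set.Iic s, Real.exp (-τ ^ 2 / 2)

/-- `κ_ε(s) = Φ(s/2 − ε/s) − e^ε Φ(−s/2 − ε/s)`. -/
noncomputable def kappaDP (ε s : ℝ) : ℝ :=
  stdNormalCDF (s / 2 - ε / s) - Real.exp ε * stdNormalCDF (-(s / 2) - ε / s)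

/-! Moving one coordinate of `d` from `0` to `μ` shifts the centre of the Laplace measure from
`0` to `μ / n`. The half-line `[μ / n, ∞)` has mass `1 / 2` under the shifted measure but only
`exp (-μ / (n b)) / 2` under the original one, so `ε`-differential privacy forces
`μ / (n b) ≤ ε`. The mean-square error is the second moment `2 b²` of `Lap(0, b)`. -/

open Set Real

lemma integral_sq_mul_exp_neg_abs_div {b : ℝ} (hb : 0 < b) :
    ∫ t : ℝ, t ^ 2 * exp (-|t| / b) = 4 * b ^ 3 := by
  have hIoi : ∀ s ∈ Ioi (0 : ℝ),
      s ^ 2 * exp (-s / b) = s ^ ((3 : ℝ) - 1) * exp (-(b⁻¹ * s)) := by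
    intro s _
    rw [show (3 : ℝ) - 1 = 2 by norm_num, rpow_two, neg_div, div_eq_inv_mul]
  have h := integral_comp_abs (f := fun s => s ^ 2 * exp (-s / b))
  simp only [sq_abs] at h
  rw [h, setIntegral_congr_fun measurableSet_Ioi hIoi,
    integral_rpow_mul_exp_neg_mul_Ioi three_pos (inv_pos.2 hb), one_div, inv_inv,
    show (3 : ℝ) = ((3 : ℕ) : ℝ) by norm_num, rpow_natCast]
  norm_num [Nat.factorial]
  ring

lemma laplaceMeasure_Ici {m b a : ℝ} (hb : 0 < b) (hma : m ≤ a) :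
    laplaceMeasure m b (Ici a) = ENNReal.ofReal (exp (-(a - m) / b) / 2) := by
  have hexp : ∀ x, exp (m / b) * exp (-b⁻¹ * x) = exp (-(x - m) / b) := fun x => by
    rw [← exp_add]; congr 1; field_simp; ring
  have hIoi : ∀ x ∈ Ioi a, 1 / (2 * b) * exp (-|x - m| / b)
      = exp (m / b) / (2 * b) * exp (-b⁻¹ * x) := by
    intro x hx
    rw [abs_of_nonneg (by linarith [mem_Ioi.1 hx]), ← hexp]
    ring
  have hint : IntegrableOn (fun x => exp (m / b) / (2 * b) * exp (-b⁻¹ * x)) (Ioi a) :=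
    (integrableOn_exp_mul_Ioi (by simpa using hb) a).const_mul _
  rw [laplaceMeasure, withDensity_apply _ measurableSet_Ici,
    Measure.restrict_congr_set Ioi_ae_eq_Ici.symm,
    setLIntegral_congr_fun measurableSet_Ioi (fun x hx => congrArg ENNReal.ofReal (hIoi x hx)),
    ← ofReal_integral_eq_lintegral_ofReal hint (Eventually.of_forall fun x => by positivity),
    integral_const_mul, integral_exp_mul_Ioi (by simpa using hb), ← hexp]
  congr 1
  field_simp

lemma integral_sq_abs_sub_laplaceMeasure (m : ℝ) {b : ℝ} (hb : 0 < b) :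
    ∫ x, |x - m| ^ 2 ∂laplaceMeasure m b = 2 * b ^ 2 := by
  rw [laplaceMeasure, integral_withDensity_eq_integral_toReal_smul (by fun_prop)
    (Eventually.of_forall fun _ => ENNReal.ofReal_lt_top)]
  have hdens : ∀ x, (ENNReal.ofReal (1 / (2 * b) * exp (-|x - m| / b))).toReal • |x - m| ^ 2
      = (fun t => 1 / (2 * b) * (t ^ 2 * exp (-|t| / b))) (x - m) := fun x => by
    rw [ENNReal.toReal_ofReal (by positivity), smul_eq_mul, sq_abs]
    ring
  simp only [hdens]
  rw [integral_sub_right_eq_self (fun t => 1 / (2 * b) * (t ^ 2 * exp (-|t| / b))) m,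
    integral_const_mul, integral_sq_mul_exp_neg_abs_div hb]
  field_simp
  ring

lemma sub_le_mul_of_laplaceMeasure_Ici_le {m m' b ε : ℝ} (hb : 0 < b) (hm : m' ≤ m)
    (h : laplaceMeasure m b (Ici m) ≤ ENNReal.ofReal (exp ε) * laplaceMeasure m' b (Ici m)) :
    m - m' ≤ ε * b := by
  rw [laplaceMeasure_Ici hb le_rfl, laplaceMeasure_Ici hb hm,
    ← ENNReal.ofReal_mul (exp_pos ε).le, ENNReal.ofReal_le_ofReal_iff (by positivity),
    sub_self, neg_zero, zero_div, exp_zero,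
    mul_div_assoc', ← exp_add, div_le_div_iff_of_pos_right two_pos, one_le_exp_iff] at h
  rw [← div_le_iff₀ hb]
  linarith [neg_div b (m - m')]

lemma muAdjacent_single_zero {n : ℕ} {μ : ℝ} (hμ : 0 < μ) (i : Fin n) :
    MuAdjacent μ (Pi.single i μ) 0 := by
  refine ⟨⟨i, by simp [hμ.ne'], fun j hj => ?_⟩,
    by simp [Pi.single_apply, apply_ite, abs_of_pos hμ]⟩
  by_contra hji
  simp [hji] at hj

theorem dpca_laplace_tradeoff_general {n : ℕ} (hn : 0 < n)
    (b ε μ : ℝ) (hb : 0 < b) (hμ : 0 < μ)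
    (hDP : PreservesDP μ ε 0
      (fun d : Fin n → ℝ => laplaceMeasure ((∑ i, d i) / (n : ℝ)) b)) :
    b ≥ μ / ((n : ℝ) * ε) ∧
    ∀ d : Fin n → ℝ,
      (∫ x : ℝ, |x - (∑ i, d i) / (n : ℝ)| ^ 2
          ∂(laplaceMeasure ((∑ i, d i) / (n : ℝ)) b)) = 2 * b ^ 2 ∧
      2 * b ^ 2 ≥ 2 * μ ^ 2 / ((n : ℝ) ^ 2 * ε ^ 2) := by
  have hshift := hDP _ 0 (muAdjacent_single_zero hμ ⟨0, hn⟩) (Ici (μ / n)) measurableSet_Ici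
  simp only [Finset.sum_pi_single', Finset.mem_univ, if_true, Pi.zero_apply, Finset.sum_const_zero,
    zero_div, ENNReal.ofReal_zero, add_zero] at hshift
  have hμb : μ / n ≤ ε * b := by
    simpa using sub_le_mul_of_laplaceMeasure_Ici_le hb (by positivity) hshift
  have hε : 0 < ε := pos_of_mul_pos_left ((by positivity : 0 < μ / n).trans_le hμb) hb.le
  have hge : μ / (n * ε) ≤ b := by
    rw [div_le_iff₀ (by positivity)]
    linarith [(div_le_iff₀ (by positivity)).1 hμb]
  refine ⟨hge, fun d => ⟨integral_sq_abs_sub_laplaceMeasure _ hb, ?_⟩⟩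
  calc 2 * μ ^ 2 / ((n : ℝ) ^ 2 * ε ^ 2) = 2 * (μ / (n * ε)) ^ 2 := by ring
    _ ≤ 2 * b ^ 2 := by gcongr

/-- trade-off of the DPCA algorithm under the Laplace mechanism. -/
theorem dpca_laplace_tradeoff {n : ℕ} (hn : 0 < n)
    (b ε μ : ℝ) (hb : 0 < b) (hε : 0 < ε) (hμ : 0 < μ)
    (hDP : PreservesDP μ ε 0
      (fun d : Fin n → ℝ => laplaceMeasure ((∑ i, d i) / (n : ℝ)) b)) :
    b ≥ μ / ((n : ℝ) * ε) ∧
    ∀ d : Fin n → ℝ,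
      (∫ x : ℝ, |x - (∑ i, d i) / (n : ℝ)| ^ 2
          ∂(laplaceMeasure ((∑ i, d i) / (n : ℝ)) b)) = 2 * b ^ 2 ∧
      2 * b ^ 2 ≥ 2 * μ ^ 2 / ((n : ℝ) ^ 2 * ε ^ 2) :=
  dpca_laplace_tradeoff_general hn b ε μ hb hμ hDP
end

section
/- Let G be an undirected connected graph on n ≥ 2 vertices, let ā ≥ 1, and for each edge (i,j) let a_{i→j} and a_{j→i} be positive integers in the interval [ā/√2, ā]. With ζ = 1/(nā² + 1), define A ∈ ℝ^{n×n} by [A]_{ij} = −ζ a_{i→j} a_{j→i} for edges (i,j), [A]_{ij} = 0 for non-adjacent i ≠ j, and [A]_{ii} = Σ_{j ∈ N_i} ζ a_{i→j} a_{j→i}. Then: (a) A is symmetric and positive semidefinite with A1ₙ = 0; (b) [A]_{ii} ≤ (n−1)ā²/(nā²+1) and |[A]_{ij}| ≤ ā²/(nā²+1) for all i ≠ j; (c) all eigenvalues of A lie in [0, 2); (d) P := I − A is symmetric and doubly stochastic, and [P]_{ij} ≥ 1/(2(n + ā^{−2})) for every j ∈ N_i ∪ {i}. -/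
open MeasureTheory ProbabilityTheory Filter Matrix

open Finset

/-! The matrix `A` is the Laplacian of `G` weighted by `w i j = ζ a_{i→j} a_{j→i}`, hence
symmetric, annihilates `1ₙ`, and positive semidefinite since `xᵀ A x = ½ ∑ w i j (x i - x j)²`.
Every edge weight lies in `[ζ ā² / 2, ζ ā²]` and `n ζ ā² < 1`, so `A i i ≤ (n - 1) ζ ā² < 1`.
As the off-diagonal entries of a row of `A` sum to `-A i i`, the Gershgorin discs of `A` are the
intervals `[0, 2 A i i]`, which bounds the eigenvalues, and `I - A` is entrywise nonnegative
with the row and column sums of `I` minus those of `A`. -/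

section WeightedLaplacian

variable {ι : Type*} [Fintype ι] [DecidableEq ι]

def weightedLaplacian (w : Matrix ι ι ℝ) : Matrix ι ι ℝ :=
  diagonal (fun i => ∑ j, w i j) - w

variable {w : Matrix ι ι ℝ}

lemma weightedLaplacian_apply_self (w : Matrix ι ι ℝ) (i : ι) :
    weightedLaplacian w i i = ∑ j ∈ univ.erase i, w i j := by
  simp [weightedLaplacian, Finset.sum_erase_eq_sub (mem_univ i)]

lemma weightedLaplacian_apply_of_ne {i j : ι} (h : i ≠ j) :
    weightedLaplacian w i j = -w i j := by
  simp [weightedLaplacian, h]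

lemma weightedLaplacian_isSymm (hw : w.IsSymm) : (weightedLaplacian w).IsSymm :=
  (isSymm_diagonal _).sub hw

lemma weightedLaplacian_mulVec_one (w : Matrix ι ι ℝ) : weightedLaplacian w *ᵥ 1 = 0 := by
  ext i
  simp [weightedLaplacian, mulVec, dotProduct, diagonal_apply]

lemma one_vecMul_weightedLaplacian (hw : w.IsSymm) : 1 ᵥ* weightedLaplacian w = 0 := by
  rw [← mulVec_transpose, (weightedLaplacian_isSymm hw).eq, weightedLaplacian_mulVec_one]

lemma dotProduct_weightedLaplacian_mulVec (hw : w.IsSymm) (x : ι → ℝ) :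
    x ⬝ᵥ weightedLaplacian w *ᵥ x = (∑ i, ∑ j, w i j * (x i - x j) ^ 2) / 2 := by
  have hswap : ∑ i, ∑ j, w i j * x j ^ 2 = ∑ i, ∑ j, w i j * x i ^ 2 := by
    rw [Finset.sum_comm]
    simp_rw [hw.apply]
  have hexpand : ∑ i, ∑ j, w i j * (x i - x j) ^ 2 =
      ∑ i, ∑ j, w i j * x i ^ 2 + ∑ i, ∑ j, w i j * x j ^ 2
        - 2 * ∑ i, ∑ j, x i * (w i j * x j) := by
    simp only [mul_sum, ← sum_add_distrib, ← sum_sub_distrib]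
    exact sum_congr rfl fun i _ => sum_congr rfl fun j _ => by ring
  have hdiag : x ⬝ᵥ diagonal (fun i => ∑ j, w i j) *ᵥ x = ∑ i, ∑ j, w i j * x i ^ 2 := by
    simp only [dotProduct, mulVec_diagonal, mul_sum, sum_mul]
    exact sum_congr rfl fun i _ => sum_congr rfl fun j _ => by ring
  have hoff : x ⬝ᵥ w *ᵥ x = ∑ i, ∑ j, x i * (w i j * x j) := by
    simp only [dotProduct, mulVec, mul_sum]
  rw [weightedLaplacian, sub_mulVec, dotProduct_sub, hdiag, hoff, hexpand, hswap]
  ring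

lemma weightedLaplacian_posSemidef (hw : w.IsSymm) (hw0 : ∀ i j, 0 ≤ w i j) :
    (weightedLaplacian w).PosSemidef := by
  refine .of_dotProduct_mulVec_nonneg (isHermitian_iff_isSymm.2 (weightedLaplacian_isSymm hw))
    fun x => ?_
  rw [star_trivial, dotProduct_weightedLaplacian_mulVec hw]
  exact div_nonneg
    (sum_nonneg fun i _ => sum_nonneg fun j _ => mul_nonneg (hw0 i j) (sq_nonneg _)) zero_le_two

lemma weightedLaplacian_apply_self_le (i : ι) {b : ℝ} (hb : ∀ j, w i j ≤ b) :
    weightedLaplacian w i i ≤ (Fintype.card ι - 1) * b := by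
  rw [weightedLaplacian_apply_self, ← card_univ, ← cast_card_erase_of_mem (mem_univ i),
    ← nsmul_eq_mul]
  exact sum_le_card_nsmul _ _ _ fun j _ => hb j

lemma weightedLaplacian_eigenvalue_mem_Icc (hw0 : ∀ i j, 0 ≤ w i j) {c : ℝ}
    {v : ι → ℝ} (hv : v ≠ 0) (hcv : weightedLaplacian w *ᵥ v = c • v) :
    ∃ i, c ∈ Set.Icc 0 (2 * weightedLaplacian w i i) := by
  have hc : Module.End.HasEigenvalue (toLin' (weightedLaplacian w)) c :=
    Module.End.hasEigenvalue_of_hasEigenvector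
      ⟨Module.End.mem_eigenspace_iff.2 (by rwa [toLin'_apply]), hv⟩
  obtain ⟨i, hi⟩ := eigenvalue_mem_ball hc
  have hradius : ∑ j ∈ univ.erase i, ‖weightedLaplacian w i j‖ = weightedLaplacian w i i := by
    rw [weightedLaplacian_apply_self]
    refine sum_congr rfl fun j hj => ?_
    rw [weightedLaplacian_apply_of_ne (ne_of_mem_erase hj).symm, norm_neg,
      Real.norm_of_nonneg (hw0 i j)]
  rw [hradius, Metric.mem_closedBall, Real.dist_eq, abs_le] at hi
  exact ⟨i, by linarith, by linarith⟩

lemma one_sub_weightedLaplacian_mem_doublyStochastic (hw : w.IsSymm) (hw0 : ∀ i j, 0 ≤ w i j)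
    (hdiag : ∀ i, weightedLaplacian w i i ≤ 1) :
    1 - weightedLaplacian w ∈ doublyStochastic ℝ ι := by
  refine mem_doublyStochastic.2 ⟨fun i j => ?_, ?_, ?_⟩
  · rcases eq_or_ne i j with rfl | hij
    · simpa using hdiag i
    · simpa [hij, weightedLaplacian_apply_of_ne hij] using hw0 i j
  · rw [sub_mulVec, one_mulVec, weightedLaplacian_mulVec_one, sub_zero]
  · rw [vecMul_sub, vecMul_one, one_vecMul_weightedLaplacian hw, sub_zero]

end WeightedLaplacian

section DiShuf

variable {V : Type*} (G : SimpleGraph V) [DecidableRel G.Adj] (a : V → V → ℕ) (ζ : ℝ)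

def dishufWeight : Matrix V V ℝ :=
  of fun i j => if G.Adj i j then ζ * a i j * a j i else 0

lemma dishufWeight_isSymm : (dishufWeight G a ζ).IsSymm := by
  refine IsSymm.ext fun i j => ?_
  simp only [dishufWeight, of_apply, G.adj_comm j i]
  split_ifs <;> ring

variable {G a ζ}

lemma dishufWeight_nonneg (hζ : 0 ≤ ζ) (i j : V) : 0 ≤ dishufWeight G a ζ i j := by
  simp only [dishufWeight, of_apply]
  split_ifs <;> positivity

lemma dishufWeight_le {abar : ℝ} (hζ : 0 ≤ ζ) (habar : 0 ≤ abar)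
    (ha_ub : ∀ i j, G.Adj i j → (a i j : ℝ) ≤ abar) (i j : V) :
    dishufWeight G a ζ i j ≤ ζ * abar ^ 2 := by
  simp only [dishufWeight, of_apply]
  split_ifs with h
  · rw [mul_assoc, sq]
    exact mul_le_mul_of_nonneg_left
      (mul_le_mul (ha_ub i j h) (ha_ub j i h.symm) (Nat.cast_nonneg _) habar) hζ
  · positivity

lemma le_dishufWeight {abar : ℝ} (hζ : 0 ≤ ζ) (habar : 0 ≤ abar)
    (ha_lb : ∀ i j, G.Adj i j → abar / Real.sqrt 2 ≤ (a i j : ℝ)) {i j : V} (h : G.Adj i j) :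
    ζ * abar ^ 2 / 2 ≤ dishufWeight G a ζ i j := by
  have hsq : abar ^ 2 / 2 = abar / Real.sqrt 2 * (abar / Real.sqrt 2) := by
    rw [← sq, div_pow, Real.sq_sqrt zero_le_two]
  simp only [dishufWeight, of_apply, if_pos h]
  rw [mul_div_assoc, hsq, mul_assoc]
  exact mul_le_mul_of_nonneg_left
    (mul_le_mul (ha_lb i j h) (ha_lb j i h.symm) (by positivity) (Nat.cast_nonneg _)) hζ

lemma eq_weightedLaplacian_dishufWeight [Fintype V] [DecidableEq V] {A : Matrix V V ℝ}
    (hA_adj : ∀ i j, G.Adj i j → A i j = -(ζ * (a i j : ℝ) * (a j i : ℝ)))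
    (hA_nonadj : ∀ i j, i ≠ j → ¬G.Adj i j → A i j = 0)
    (hA_diag : ∀ i, A i i = ∑ j, if G.Adj i j then ζ * (a i j : ℝ) * (a j i : ℝ) else 0) :
    A = weightedLaplacian (dishufWeight G a ζ) := by
  ext i j
  rcases eq_or_ne i j with rfl | hij
  · simp [weightedLaplacian, hA_diag, dishufWeight]
  · rw [weightedLaplacian_apply_of_ne hij]
    by_cases h : G.Adj i j
    · simp [hA_adj i j h, dishufWeight, h]
    · simp [hA_nonadj i j hij h, dishufWeight, h]

end DiShuf

theorem dishuf_matrix_properties_general {n : ℕ}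
    (G : SimpleGraph (Fin n)) [DecidableRel G.Adj]
    (abar : ℝ) (habar : 1 ≤ abar) (a : Fin n → Fin n → ℕ)
    (ha_lb : ∀ i j, G.Adj i j → abar / Real.sqrt 2 ≤ (a i j : ℝ))
    (ha_ub : ∀ i j, G.Adj i j → (a i j : ℝ) ≤ abar)
    (ζ : ℝ) (hζ : ζ = 1 / ((n : ℝ) * abar ^ 2 + 1))
    (A : Matrix (Fin n) (Fin n) ℝ)
    (hA_adj : ∀ i j, G.Adj i j → A i j = -(ζ * (a i j : ℝ) * (a j i : ℝ)))
    (hA_nonadj : ∀ i j, i ≠ j → ¬G.Adj i j → A i j = 0)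
    (hA_diag : ∀ i, A i i = ∑ j, if G.Adj i j then ζ * (a i j : ℝ) * (a j i : ℝ) else 0) :
    (A.IsSymm ∧ A.PosSemidef ∧ A.mulVec (fun _ => 1) = 0) ∧
    ((∀ i, A i i ≤ ((n : ℝ) - 1) * abar ^ 2 / ((n : ℝ) * abar ^ 2 + 1)) ∧
      (∀ i j, i ≠ j → |A i j| ≤ abar ^ 2 / ((n : ℝ) * abar ^ 2 + 1))) ∧
    (∀ (c : ℝ) (v : Fin n → ℝ), v ≠ 0 → A.mulVec v = c • v → 0 ≤ c ∧ c < 2) ∧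
    (((1 - A).IsSymm ∧
        (∀ i j, 0 ≤ (1 - A) i j) ∧
        (∀ i, ∑ j, (1 - A) i j = 1) ∧
        (∀ j, ∑ i, (1 - A) i j = 1)) ∧
      ∀ i j, (G.Adj i j ∨ i = j) →
        1 / (2 * ((n : ℝ) + (abar ^ 2)⁻¹)) ≤ (1 - A) i j) := by
  have habar0 : 0 ≤ abar := zero_le_one.trans habar
  have hζ0 : 0 ≤ ζ := hζ ▸ by positivity
  set t := abar ^ 2 / ((n : ℝ) * abar ^ 2 + 1) with ht_def
  have ht0 : 0 ≤ t := by positivity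
  have ht : ζ * abar ^ 2 = t := by rw [hζ, one_div_mul_eq_div]
  have hnt : (n : ℝ) * t < 1 := by
    rw [← mul_div_assoc, div_lt_one (by positivity)]
    linarith
  have hbound : 1 / (2 * ((n : ℝ) + (abar ^ 2)⁻¹)) = t / 2 := by
    have : abar ≠ 0 := by positivity
    rw [ht_def]
    field_simp
  obtain rfl := eq_weightedLaplacian_dishufWeight hA_adj hA_nonadj hA_diag
  set w := dishufWeight G a ζ
  have hw_symm : w.IsSymm := dishufWeight_isSymm G a ζ
  have hw_nonneg : ∀ i j, 0 ≤ w i j := dishufWeight_nonneg hζ0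
  have hw_le : ∀ i j, w i j ≤ t := ht ▸ dishufWeight_le hζ0 habar0 ha_ub
  have hdiag : ∀ i, weightedLaplacian w i i ≤ (n - 1) * t := fun i => by
    simpa using weightedLaplacian_apply_self_le i (hw_le i)
  have hP := one_sub_weightedLaplacian_mem_doublyStochastic hw_symm hw_nonneg
    fun i => (hdiag i).trans (by linarith)
  refine ⟨⟨weightedLaplacian_isSymm hw_symm, weightedLaplacian_posSemidef hw_symm hw_nonneg,
      weightedLaplacian_mulVec_one w⟩,
    ⟨fun i => (hdiag i).trans_eq (mul_div_assoc ..).symm, fun i j hij => ?_⟩,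
    fun c v hv hcv => ?_,
    ⟨⟨isSymm_one.sub (weightedLaplacian_isSymm hw_symm), mem_doublyStochastic_iff_sum.1 hP⟩,
      fun i j hij => ?_⟩⟩
  · rw [weightedLaplacian_apply_of_ne hij, abs_neg, abs_of_nonneg (hw_nonneg i j)]
    exact hw_le i j
  · obtain ⟨i, hc0, hc⟩ := weightedLaplacian_eigenvalue_mem_Icc hw_nonneg hv hcv
    exact ⟨hc0, by linarith [hdiag i]⟩
  · rw [hbound]
    rcases hij with hadj | rfl
    · simpa [G.ne_of_adj hadj, weightedLaplacian_apply_of_ne (G.ne_of_adj hadj), ← ht]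
        using le_dishufWeight hζ0 habar0 ha_lb hadj
    · simp only [Matrix.sub_apply, one_apply_eq]
      linarith [hdiag i]

/-- properties of the noise-mixing matrix `A` and of `P = I − A`
constructed from the DiShuf mechanism with `ā`-bounded integer coefficients. -/
theorem dishuf_matrix_properties {n : ℕ} (hn : 2 ≤ n)
    (G : SimpleGraph (Fin n)) [DecidableRel G.Adj] (hGconn : G.Connected)
    (abar : ℝ) (habar : 1 ≤ abar) (a : Fin n → Fin n → ℕ)
    (ha_pos : ∀ i j, G.Adj i j → 0 < a i j)
    (ha_lb : ∀ i j, G.Adj i j → abar / Real.sqrt 2 ≤ (a i j : ℝ))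
    (ha_ub : ∀ i j, G.Adj i j → (a i j : ℝ) ≤ abar)
    (ζ : ℝ) (hζ : ζ = 1 / ((n : ℝ) * abar ^ 2 + 1))
    (A : Matrix (Fin n) (Fin n) ℝ)
    (hA_adj : ∀ i j, G.Adj i j → A i j = -(ζ * (a i j : ℝ) * (a j i : ℝ)))
    (hA_nonadj : ∀ i j, i ≠ j → ¬G.Adj i j → A i j = 0)
    (hA_diag : ∀ i, A i i = ∑ j, if G.Adj i j then ζ * (a i j : ℝ) * (a j i : ℝ) else 0) :
    (A.IsSymm ∧ A.PosSemidef ∧ A.mulVec (fun _ => 1) = 0) ∧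
    ((∀ i, A i i ≤ ((n : ℝ) - 1) * abar ^ 2 / ((n : ℝ) * abar ^ 2 + 1)) ∧
      (∀ i j, i ≠ j → |A i j| ≤ abar ^ 2 / ((n : ℝ) * abar ^ 2 + 1))) ∧
    (∀ (c : ℝ) (v : Fin n → ℝ), v ≠ 0 → A.mulVec v = c • v → 0 ≤ c ∧ c < 2) ∧
    (((1 - A).IsSymm ∧
        (∀ i j, 0 ≤ (1 - A) i j) ∧
        (∀ i, ∑ j, (1 - A) i j = 1) ∧
        (∀ j, ∑ i, (1 - A) i j = 1)) ∧
      ∀ i j, (G.Adj i j ∨ i = j) →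
        1 / (2 * ((n : ℝ) + (abar ^ 2)⁻¹)) ≤ (1 - A) i j) :=
  dishuf_matrix_properties_general G abar habar a ha_lb ha_ub ζ hζ A hA_adj hA_nonadj hA_diag
end

section
/- Let n ≥ 2 and let A ∈ ℝ^{n×n} be symmetric positive semidefinite with eigenvalues 0 = λ₁ ≤ λ₂ ≤ … ≤ λₙ and an orthonormal basis of eigenvectors u₁, …, uₙ with u₁ = 1ₙ/√n. Let α ∈ (0,1) satisfy |1 − λ_j| ≤ α for all j ≥ 2 and λ₂ ≥ 1 − α. Then for all μ > 0 and σ_γ, σ_η > 0: max_{1≤i≤n} Σ_{j=1}^n ( μ²(1 − λ_j)² / (σ_γ² + λ_j² σ_η²) ) · (u_jᵀ e_i)² ≤ μ²/(n σ_γ²) + (n−1) μ² α² / (σ_γ² + (1−α)² σ_η²), where e_i is the i-th standard basis vector. -/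
/-!
The `j = 0` term is computed exactly: `λ₀ = 0` and `u₀ = 1ₙ/√n`. For every other `j`,
`|1 − λⱼ| ≤ α < 1` bounds the numerator `(1 − λⱼ)²` by `α²` and forces `λⱼ ≥ 1 − α > 0`, so the
denominator is at least `σγ² + (1 − α)² ση²`; finally `(uⱼ i)² ≤ ‖uⱼ‖² = 1`.
-/

open MeasureTheory ProbabilityTheory Filter Matrix

lemma sq_apply_le_one_of_dotProduct_self_eq_one {ι : Type*} [Fintype ι] {v : ι → ℝ}
    (hv : v ⬝ᵥ v = 1) (i : ι) : v i ^ 2 ≤ 1 := by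
  rw [← hv, dotProduct, sq]
  exact Finset.single_le_sum (fun k _ => mul_self_nonneg (v k)) (Finset.mem_univ i)

lemma Finset.sum_le_apply_add_card_sub_one_mul {ι : Type*} [Fintype ι] [DecidableEq ι]
    (f : ι → ℝ) (j₀ : ι) {c : ℝ} (hf : ∀ j, j ≠ j₀ → f j ≤ c) :
    ∑ j, f j ≤ f j₀ + ((Fintype.card ι : ℝ) - 1) * c := by
  have hcard : ((Finset.univ.erase j₀).card : ℝ) = (Fintype.card ι : ℝ) - 1 := by
    rw [Finset.card_erase_of_mem (Finset.mem_univ j₀), Finset.card_univ,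
      Nat.cast_sub (Fintype.card_pos_iff.mpr ⟨j₀⟩), Nat.cast_one]
  rw [← Finset.add_sum_erase _ _ (Finset.mem_univ j₀), ← hcard, ← nsmul_eq_mul]
  gcongr
  exact Finset.sum_le_card_nsmul _ _ _ fun j hj => hf j (Finset.ne_of_mem_erase hj)

noncomputable def sensitivityWeight (μ σγ ση lam : ℝ) : ℝ :=
  μ ^ 2 * (1 - lam) ^ 2 / (σγ ^ 2 + lam ^ 2 * ση ^ 2)

lemma sensitivityWeight_zero (μ σγ ση : ℝ) :
    sensitivityWeight μ σγ ση 0 = μ ^ 2 / σγ ^ 2 := by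
  simp [sensitivityWeight]

lemma sensitivityWeight_nonneg (μ σγ ση lam : ℝ) : 0 ≤ sensitivityWeight μ σγ ση lam := by
  unfold sensitivityWeight
  positivity

lemma sensitivityWeight_le_of_abs_one_sub_le {μ σγ ση α lam : ℝ} (hσγ : σγ ≠ 0) (hα : α ≤ 1)
    (hlam : |1 - lam| ≤ α) :
    sensitivityWeight μ σγ ση lam ≤ sensitivityWeight μ σγ ση (1 - α) := by
  have hnum : (1 - lam) ^ 2 ≤ (1 - (1 - α)) ^ 2 := by
    rw [sub_sub_cancel, ← sq_abs]
    exact pow_le_pow_left₀ (abs_nonneg _) hlam 2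
  have hlam_sq : (1 - α) ^ 2 ≤ lam ^ 2 :=
    pow_le_pow_left₀ (by linarith) (by linarith [le_abs_self (1 - lam)]) 2
  unfold sensitivityWeight
  gcongr

/-- bound on the squared sensitivity of the Gaussian mechanism in the
proof of Theorem 1. -/
theorem sensitivity_bound {n : ℕ} (hn : 2 ≤ n)
    (lam : Fin n → ℝ) (u : Fin n → Fin n → ℝ)
    (hlam0 : lam ⟨0, by omega⟩ = 0)
    (horth : ∀ j k, dotProduct (u j) (u k) = if j = k then 1 else 0)
    (hu0 : u ⟨0, by omega⟩ = fun _ => (Real.sqrt (n : ℝ))⁻¹)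
    (α : ℝ) (hα : α ∈ Set.Ioo (0 : ℝ) 1)
    (hαbound : ∀ j : Fin n, j ≠ ⟨0, by omega⟩ → |1 - lam j| ≤ α)
    (μ σγ ση : ℝ) (hσγ : 0 < σγ) :
    ∀ i : Fin n,
      (∑ j, μ ^ 2 * (1 - lam j) ^ 2 / (σγ ^ 2 + lam j ^ 2 * ση ^ 2) * (u j i) ^ 2) ≤
        μ ^ 2 / ((n : ℝ) * σγ ^ 2) +
          ((n : ℝ) - 1) * μ ^ 2 * α ^ 2 / (σγ ^ 2 + (1 - α) ^ 2 * ση ^ 2) := by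
  intro i
  have hterm : ∀ j, j ≠ ⟨0, by omega⟩ →
      sensitivityWeight μ σγ ση (lam j) * u j i ^ 2 ≤ sensitivityWeight μ σγ ση (1 - α) := by
    intro j hj
    have hweight := sensitivityWeight_le_of_abs_one_sub_le (μ := μ) (ση := ση) hσγ.ne' hα.2.le
      (hαbound j hj)
    have hu_sq := sq_apply_le_one_of_dotProduct_self_eq_one (by simpa using horth j j) i
    exact (mul_le_of_le_one_right (sensitivityWeight_nonneg ..) hu_sq).trans hweight
  calc _ ≤ _ := Finset.sum_le_apply_add_card_sub_one_mul _ _ hterm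
    _ = _ := by
      rw [hlam0, hu0, sensitivityWeight_zero, Fintype.card_fin, inv_pow,
        Real.sq_sqrt (Nat.cast_nonneg n)]
      unfold sensitivityWeight
      ring
end

section
/- Fix ε ≥ 0 and define κ_ε(s) := Φ(s/2 − ε/s) − e^ε Φ(−s/2 − ε/s) for s > 0, where Φ is the standard normal CDF. Then κ_ε is differentiable on (0,∞) with derivative κ_ε'(s) = (1/√(2π)) · e^{−(1/2)(s/2 − ε/s)²} for every s > 0; in particular κ_ε is strictly increasing on (0,∞). -/
open MeasureTheory ProbabilityTheory Filter Matrix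

/-! The derivatives of the two Gaussian terms are `φ(s/2 − ε/s) (1/2 + ε/s²)` and
`e^ε φ(−s/2 − ε/s) (−1/2 + ε/s²)`, where `φ = Φ'`. Since `(s/2 + ε/s)² = (s/2 − ε/s)² + 2ε`,
the weight `e^ε` exactly cancels the shift, `e^ε φ(−s/2 − ε/s) = φ(s/2 − ε/s)`, so the
`ε/s²` parts cancel and the halves add up to `φ(s/2 − ε/s) > 0`. -/

open Real

theorem hasDerivAt_integral_Iic {f : ℝ → ℝ} (hf : Integrable f) (hfc : Continuous f) (s : ℝ) :
    HasDerivAt (fun t => ∫ τ in Set.Iic t, f τ) (f s) s := by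
  have hsplit : (fun t => ∫ τ in Set.Iic t, f τ) =
      fun t => (∫ τ in Set.Iic 0, f τ) + ∫ τ in (0 : ℝ)..t, f τ := by
    funext t
    rw [← intervalIntegral.integral_Iic_sub_Iic hf.integrableOn hf.integrableOn]
    ring
  rw [hsplit]
  exact (intervalIntegral.integral_hasDerivAt_right hf.intervalIntegrable
    (hfc.stronglyMeasurableAtFilter _ _) hfc.continuousAt).const_add _

theorem integrable_exp_neg_sq_div_two : Integrable fun τ : ℝ => exp (-τ ^ 2 / 2) := by
  convert integrable_exp_neg_mul_sq (b := 1 / 2) (by norm_num) using 3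
  ring

theorem hasDerivAt_stdNormalCDF (s : ℝ) :
    HasDerivAt stdNormalCDF ((√(2 * π))⁻¹ * exp (-s ^ 2 / 2)) s :=
  (hasDerivAt_integral_Iic integrable_exp_neg_sq_div_two (by fun_prop) s).const_mul _

theorem hasDerivAt_mul_sub_div (a ε : ℝ) {s : ℝ} (hs : s ≠ 0) :
    HasDerivAt (fun s : ℝ => a * s - ε / s) (a + ε / s ^ 2) s := by
  simpa only [mul_one, mul_neg, sub_neg_eq_add, ← div_eq_mul_inv] using
    ((hasDerivAt_id' s).const_mul a).fun_sub ((hasDerivAt_inv hs).const_mul ε)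

theorem exp_mul_exp_neg_sq_half_sub_div (ε : ℝ) {s : ℝ} (hs : s ≠ 0) :
    exp ε * exp (-(-(s / 2) - ε / s) ^ 2 / 2) = exp (-(s / 2 - ε / s) ^ 2 / 2) := by
  rw [← exp_add]
  congr 1
  field_simp
  ring

theorem hasDerivAt_kappaDP (ε : ℝ) {s : ℝ} (hs : s ≠ 0) :
    HasDerivAt (kappaDP ε) ((√(2 * π))⁻¹ * exp (-(1 / 2) * (s / 2 - ε / s) ^ 2)) s := by
  have hplus : HasDerivAt (fun s : ℝ => s / 2 - ε / s) (1 / 2 + ε / s ^ 2) s := by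
    convert hasDerivAt_mul_sub_div (1 / 2) ε hs using 2
    ring
  have hminus : HasDerivAt (fun s : ℝ => -(s / 2) - ε / s) (-(1 / 2) + ε / s ^ 2) s := by
    convert hasDerivAt_mul_sub_div (-(1 / 2)) ε hs using 2
    ring
  refine (((hasDerivAt_stdNormalCDF _).comp s hplus).fun_sub
    (((hasDerivAt_stdNormalCDF _).comp s hminus).const_mul (exp ε))).congr_deriv ?_
  rw [show -(1 / 2) * (s / 2 - ε / s) ^ 2 = -(s / 2 - ε / s) ^ 2 / 2 by ring]
  linear_combination (1 / 2 - ε / s ^ 2) * (√(2 * π))⁻¹ * exp_mul_exp_neg_sq_half_sub_div ε hs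

theorem kappa_hasDerivAt_strictMono_general (ε : ℝ) :
    (∀ s : ℝ, 0 < s →
      HasDerivAt (fun s => kappaDP ε s)
        ((Real.sqrt (2 * Real.pi))⁻¹ * Real.exp (-(1 / 2) * (s / 2 - ε / s) ^ 2)) s) ∧
    StrictMonoOn (kappaDP ε) (Set.Ioi 0) := by
  have hderiv (s : ℝ) (hs : 0 < s) := hasDerivAt_kappaDP ε hs.ne'
  refine ⟨hderiv, strictMonoOn_of_deriv_pos (convex_Ioi 0)
    (fun s hs => (hderiv s hs).continuousAt.continuousWithinAt) fun s hs => ?_⟩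
  rw [interior_Ioi] at hs
  rw [(hderiv s hs).deriv]
  positivity

/-- `κ_ε` is differentiable on `(0,∞)` with derivative
`(1/√(2π)) e^{−(1/2)(s/2 − ε/s)²}`, hence strictly increasing on `(0,∞)`. -/
theorem kappa_hasDerivAt_strictMono (ε : ℝ) (hε : 0 ≤ ε) :
    (∀ s : ℝ, 0 < s →
      HasDerivAt (fun s => kappaDP ε s)
        ((Real.sqrt (2 * Real.pi))⁻¹ * Real.exp (-(1 / 2) * (s / 2 - ε / s) ^ 2)) s) ∧
    StrictMonoOn (kappaDP ε) (Set.Ioi 0) :=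
  kappa_hasDerivAt_strictMono_general ε
end

section
/- Let n ≥ 2 be an integer, α ∈ (0,1), and μ, c, g > 0. Set σ_γ = (1+g)μ/(√n · c) and let σ_η ≥ 0. Then the inequality 1/(n σ_γ²) + (n−1)α²/(σ_γ² + (1−α)² σ_η²) ≤ c²/μ² holds if and only if σ_η² ≥ ((n−1)α²/((1−α)² c²)) · [ (1+g)² μ²/((1+g)² − 1) − (1+g)² μ²/(n(n−1)α²) ]. -/
open MeasureTheory ProbabilityTheory Filter Matrix

/-! The choice of `σγ` makes the first term of (13) equal to `c² / ((1 + g)² μ²)`, strictly below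
`c² / μ²`; clearing the positive denominators then turns (13) into a lower bound on `ση²`. -/

theorem add_div_add_mul_le_iff {a t A P q B : ℝ} (hPB : 0 < P + q * B) (hq : 0 < q)
    (hat : a < t) : a + A / (P + q * B) ≤ t ↔ (A / (t - a) - P) / q ≤ B := by
  rw [← le_sub_iff_add_le', div_le_iff₀ hPB, ← div_le_iff₀' (sub_pos.2 hat),
    ← sub_le_iff_le_add', div_le_iff₀' hq]

theorem privacy_noise_design_equiv_general (n : ℕ) (hn : 2 ≤ n) (α μ c g σγ ση : ℝ)
    (hα : α ∈ Set.Ioo (0 : ℝ) 1) (hμ : 0 < μ) (hc : 0 < c) (hg : 0 < g)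
    (hσγ : σγ = (1 + g) * μ / (Real.sqrt (n : ℝ) * c)) :
    (1 / ((n : ℝ) * σγ ^ 2) +
        ((n : ℝ) - 1) * α ^ 2 / (σγ ^ 2 + (1 - α) ^ 2 * ση ^ 2) ≤ c ^ 2 / μ ^ 2) ↔
      ση ^ 2 ≥ ((n : ℝ) - 1) * α ^ 2 / ((1 - α) ^ 2 * c ^ 2) *
        ((1 + g) ^ 2 * μ ^ 2 / ((1 + g) ^ 2 - 1) -
          (1 + g) ^ 2 * μ ^ 2 / ((n : ℝ) * ((n : ℝ) - 1) * α ^ 2)) := by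
  obtain ⟨hα0, hα1⟩ := hα
  have hn1 : (0 : ℝ) < n - 1 := by
    have : (2 : ℝ) ≤ n := by exact_mod_cast hn
    linarith
  have hg1 : 0 < (1 + g) ^ 2 - 1 := by nlinarith
  have hσγ_sq : σγ ^ 2 = (1 + g) ^ 2 * μ ^ 2 / (n * c ^ 2) := by
    rw [hσγ, div_pow, mul_pow, mul_pow, Real.sq_sqrt (by positivity)]
  have hslack : c ^ 2 / μ ^ 2 - 1 / (n * σγ ^ 2) =
      c ^ 2 * ((1 + g) ^ 2 - 1) / ((1 + g) ^ 2 * μ ^ 2) := by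
    rw [hσγ_sq]
    field_simp
  rw [add_div_add_mul_le_iff (by rw [hσγ_sq]; positivity) (pow_pos (sub_pos.2 hα1) 2)
    (sub_pos.1 (hslack ▸ by positivity)), hslack, hσγ_sq, ge_iff_le]
  refine iff_of_eq (congrArg (· ≤ ση ^ 2) ?_)
  field_simp

/-- algebraic equivalence between the privacy condition (13) and the
noise-design condition (15), with `c` playing the role of `κ_ε⁻¹(δ)`. -/
theorem privacy_noise_design_equiv (n : ℕ) (hn : 2 ≤ n) (α μ c g σγ ση : ℝ)
    (hα : α ∈ Set.Ioo (0 : ℝ) 1) (hμ : 0 < μ) (hc : 0 < c) (hg : 0 < g)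
    (hσγ : σγ = (1 + g) * μ / (Real.sqrt (n : ℝ) * c)) (hση : 0 ≤ ση) :
    (1 / ((n : ℝ) * σγ ^ 2) +
        ((n : ℝ) - 1) * α ^ 2 / (σγ ^ 2 + (1 - α) ^ 2 * ση ^ 2) ≤ c ^ 2 / μ ^ 2) ↔
      ση ^ 2 ≥ ((n : ℝ) - 1) * α ^ 2 / ((1 - α) ^ 2 * c ^ 2) *
        ((1 + g) ^ 2 * μ ^ 2 / ((1 + g) ^ 2 - 1) -
          (1 + g) ^ 2 * μ ^ 2 / ((n : ℝ) * ((n : ℝ) - 1) * α ^ 2)) :=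
  privacy_noise_design_equiv_general n hn α μ c g σγ ση hα hμ hc hg hσγ
end
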